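/- (Commutation relation, $L^1$-version.) Assume additionally that $(E,\mathcal{E})$ is a Borel space. Let $\Phi \in L^1(\Omega\times E;H)$ be such that $D_x\Phi \in L^1(\Omega\times E;H)$ for $\mu$-almost all $x \in E$. Then $D_x\delta(\Phi) = \delta(D_x\Phi) + \Phi(x)$ holds $\mathbb{P}\otimes\mu$-almost everywhere. -/

import Mathlib

/-!
Pathwise, `δ(Φ)(η + δ_x) - δ(Φ)(η)` splits into the new atom `x`, which contributes `Φ(η, x)`,
and the change of the integrand at the old atoms, which is `δ(D_xΦ)(η)` because removing an atom
`y` of `η` commutes with adding `δ_x`. This is an identity of Bochner integrals as soon as the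
four integrals converge and `η`-a.e. point is an atom of `η`. Mecke's remove-one formula turns
`Φ ∈ L¹` and `D_xΦ ∈ L¹` into this convergence for a.e. `ω` (resp. a.e. `(ω, x)`), and the
add-one formula shows that a.e. point of `N` is an atom. The integrals against `N ω` become
measurable in `ω` after replacing `N` by an s-finite kernel that agrees with it almost surely.
-/

open MeasureTheory Filter
open scoped ENNReal RealInnerProductSpace

-- Removal of a point mass: `η \ δ_x = η - δ_x` if `δ_x ≤ η`, and `η` otherwise.
open scoped Classical in
noncomputable def rmPt {E : Type*} [MeasurableSpace E] (η : Measure E) (x : E) : Measure E :=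
  if Measure.dirac x ≤ η then η - Measure.dirac x else η

/-- **Mecke's formula** (add-one form). -/
def MeckeAdd {Ω E : Type*} [MeasurableSpace Ω] [MeasurableSpace E]
    (P : Measure Ω) (μ : Measure E) (N : Ω → Measure E) : Prop :=
  ∀ f : Measure E → E → ℝ≥0∞, Measurable (Function.uncurry f) →
    ∫⁻ ω, ∫⁻ x, f (N ω) x ∂(N ω) ∂P
      = ∫⁻ ω, ∫⁻ x, f (N ω + Measure.dirac x) x ∂μ ∂P

/-- **Mecke's formula** (remove-one form). -/
def MeckeSub {Ω E : Type*} [MeasurableSpace Ω] [MeasurableSpace E]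
    (P : Measure Ω) (μ : Measure E) (N : Ω → Measure E) : Prop :=
  ∀ f : Measure E → E → ℝ≥0∞, Measurable (Function.uncurry f) →
    ∫⁻ ω, ∫⁻ x, f (rmPt (N ω) x) x ∂(N ω) ∂P
      = ∫⁻ ω, ∫⁻ x, f (N ω) x ∂μ ∂P

/-- Pathwise **Kabanov–Skorohod integral**
`δ(Φ) = ∫_E ε⁻_x Φ(x) N(dx) - ∫_E Φ(x) μ(dx)`, written in terms of a
representative `f` of `Φ`. -/
noncomputable def pathDelta {E H : Type*} [MeasurableSpace E]
    [NormedAddCommGroup H] [NormedSpace ℝ H]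
    (μ : Measure E) (f : Measure E → E → H) (η : Measure E) : H :=
  (∫ x, f (rmPt η x) x ∂η) - ∫ x, f η x ∂μ

open ProbabilityTheory

namespace ProbabilityTheory.Kernel

variable {α E : Type*} [MeasurableSpace α] [MeasurableSpace E]

theorem isSFiniteKernel_of_forall_lt_top (κ : Kernel α E) (hκ : ∀ a, κ a Set.univ < ∞) :
    IsSFiniteKernel κ := by
  classical
  -- sort the points `a` by the integer part of the total mass of `κ a`
  set m : α → ℕ := fun a => ⌊(κ a Set.univ).toReal⌋₊
  have hlevel : ∀ n, MeasurableSet (m ⁻¹' {n}) := fun n =>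
    (κ.measurable_coe MeasurableSet.univ).ennreal_toReal.nat_floor (measurableSet_singleton n)
  refine ⟨⟨fun n => piecewise (hlevel n) κ 0,
    fun n => ⟨⟨n + 1, by simp, fun a => ?_⟩⟩, ?_⟩⟩
  · rw [piecewise_apply]
    split_ifs with ha
    · have hlt := Nat.lt_floor_add_one (κ a Set.univ).toReal
      rw [show ⌊(κ a Set.univ).toReal⌋₊ = n from ha] at hlt
      exact (ENNReal.toReal_le_toReal (hκ a).ne (by simp)).1 (by exact_mod_cast hlt.le)
    · simp
  · ext a s hs
    simp_rw [sum_apply' _ _ hs, piecewise_apply, Set.mem_preimage, Set.mem_singleton_iff]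
    rw [tsum_eq_single (m a) fun n hn => by simp [Ne.symm hn]]
    simp

theorem isSFiniteKernel_of_spanning (κ : Kernel α E) {S : ℕ → Set E}
    (hS : ∀ n, MeasurableSet (S n)) (hU : ⋃ n, S n = Set.univ)
    (hκS : ∀ a n, κ a (S n) < ∞) :
    IsSFiniteKernel κ := by
  have hD : ∀ n, MeasurableSet (disjointed S n) := MeasurableSet.disjointed hS
  have hsum : κ = Kernel.sum fun n => κ.restrict (hD n) := by
    ext a s hs
    simp_rw [sum_apply' _ _ hs, restrict_apply' _ _ _ hs]
    rw [← measure_iUnion ((disjoint_disjointed S).mono fun _ _ h =>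
        h.mono Set.inter_subset_right Set.inter_subset_right) fun n => hs.inter (hD n),
      ← Set.inter_iUnion, iUnion_disjointed, hU, Set.inter_univ]
  rw [hsum]
  refine isSFiniteKernel_sum (hκs := fun n => isSFiniteKernel_of_forall_lt_top _ fun a => ?_)
  rw [restrict_apply' _ _ _ MeasurableSet.univ, Set.univ_inter]
  exact (measure_mono (disjointed_subset S n)).trans_lt (hκS a n)

theorem measurable_apply_singleton [MeasurableEq E] (κ : Kernel α E) [IsSFiniteKernel κ]
    {g : α → E} (hg : Measurable g) : Measurable fun a => κ a {g a} :=
  measurable_kernel_prodMk_left (measurableSet_eq_fun measurable_snd (hg.comp measurable_fst))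

end ProbabilityTheory.Kernel

section RemovePoint

variable {α E : Type*} [MeasurableSpace α] [MeasurableSpace E]

theorem dirac_le_iff_one_le_apply_singleton [MeasurableSingletonClass E] {η : Measure E}
    {x : E} : Measure.dirac x ≤ η ↔ 1 ≤ η {x} := by
  refine ⟨fun h => by simpa using h {x}, fun h => Measure.le_iff.2 fun s hs => ?_⟩
  rw [Measure.dirac_apply' _ hs]
  by_cases hx : x ∈ s
  · rw [Set.indicator_of_mem hx]
    exact h.trans (measure_mono (Set.singleton_subset_iff.2 hx))
  · simp [hx]

theorem rmPt_apply [MeasurableSingletonClass E] (η : Measure E) (x : E) {s : Set E}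
    (hs : MeasurableSet s) :
    rmPt η x s = if 1 ≤ η {x} then η s - Measure.dirac x s else η s := by
  unfold rmPt
  by_cases h : Measure.dirac x ≤ η
  · rw [if_pos h, if_pos (dirac_le_iff_one_le_apply_singleton.1 h), Measure.sub_apply hs h]
  · rw [if_neg h, if_neg (mt dirac_le_iff_one_le_apply_singleton.2 h)]

theorem rmPt_add_dirac_self (η : Measure E) (x : E) : rmPt (η + Measure.dirac x) x = η := by
  rw [rmPt, if_pos (Measure.le_add_left le_rfl), Measure.add_sub_cancel]

theorem rmPt_add_dirac_of_dirac_le {η : Measure E} {y : E} (h : Measure.dirac y ≤ η) (x : E) :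
    rmPt (η + Measure.dirac x) y = rmPt η y + Measure.dirac x := by
  have h' : Measure.dirac y ≤ η + Measure.dirac x := Measure.le_add_right h
  rw [rmPt, rmPt, if_pos h', if_pos h]
  ext s hs
  rw [Measure.sub_apply hs h', Measure.add_apply, Measure.add_apply, Measure.sub_apply hs h,
    ENNReal.sub_add_eq_add_sub (h s) (measure_ne_top _ _)]

theorem ProbabilityTheory.Kernel.measurable_rmPt [MeasurableEq E] (κ : Kernel α E)
    [IsSFiniteKernel κ] {g : α → E} (hg : Measurable g) :
    Measurable fun a => rmPt (κ a) (g a) := by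
  refine Measure.measurable_of_measurable_coe _ fun s hs => ?_
  simp_rw [rmPt_apply _ _ hs, Measure.dirac_apply' _ hs]
  exact Measurable.ite (measurableSet_le measurable_const (κ.measurable_apply_singleton hg))
    ((κ.measurable_coe hs).sub ((measurable_const.indicator hs).comp hg)) (κ.measurable_coe hs)

theorem ProbabilityTheory.Kernel.measurable_lintegral_rmPt [MeasurableEq E] (κ : Kernel α E)
    [IsSFiniteKernel κ] {F : α → Measure E → E → ℝ≥0∞}
    (hF : Measurable fun q : α × Measure E × E => F q.1 q.2.1 q.2.2) :
    Measurable fun a => ∫⁻ y, F a (rmPt (κ a) y) y ∂κ a :=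
  Measurable.lintegral_kernel_prod_right (κ := κ) <| hF.comp <| measurable_fst.prodMk <|
    ((κ.comap Prod.fst measurable_fst).measurable_rmPt measurable_snd).prodMk measurable_snd

end RemovePoint

section FiniteOnSpanning

variable {α E : Type*} [MeasurableSpace α] [MeasurableSpace E] (μ : Measure E) [SigmaFinite μ]

open scoped Classical in
noncomputable def finiteOnSpanningOrZero (η : Measure E) : Measure E :=
  if ∀ n, η (spanningSets μ n) < ∞ then η else 0

variable {μ}

theorem finiteOnSpanningOrZero_of_forall_lt_top {η : Measure E}
    (h : ∀ n, η (spanningSets μ n) < ∞) : finiteOnSpanningOrZero μ η = η :=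
  if_pos h

theorem finiteOnSpanningOrZero_apply_spanningSets_lt_top (η : Measure E) (n : ℕ) :
    finiteOnSpanningOrZero μ η (spanningSets μ n) < ∞ := by
  unfold finiteOnSpanningOrZero
  split_ifs with h
  exacts [h n, by simp]

theorem measurable_finiteOnSpanningOrZero :
    Measurable (finiteOnSpanningOrZero μ : Measure E → Measure E) := by
  refine Measurable.ite ?_ measurable_id measurable_const
  simp_rw [Set.ofPred_forall]
  exact .iInter fun n =>
    Measure.measurable_coe (measurableSet_spanningSets μ n) measurableSet_Iio

theorem finiteOnSpanningOrZero_add_dirac {η : Measure E} (h : finiteOnSpanningOrZero μ η = η)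
    (x : E) : finiteOnSpanningOrZero μ (η + Measure.dirac x) = η + Measure.dirac x :=
  finiteOnSpanningOrZero_of_forall_lt_top fun n => by
    rw [Measure.add_apply, ← h]
    exact ENNReal.add_lt_top.2
      ⟨finiteOnSpanningOrZero_apply_spanningSets_lt_top _ n, measure_lt_top _ _⟩

variable (μ)

noncomputable def ProbabilityTheory.Kernel.finiteOnSpanningOrZero (κ : Kernel α E) :
    Kernel α E :=
  ⟨fun a => _root_.finiteOnSpanningOrZero μ (κ a),
    measurable_finiteOnSpanningOrZero.comp κ.measurable⟩

instance (κ : Kernel α E) : IsSFiniteKernel (κ.finiteOnSpanningOrZero μ) :=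
  Kernel.isSFiniteKernel_of_spanning _ (measurableSet_spanningSets μ) (iUnion_spanningSets μ)
    fun a => finiteOnSpanningOrZero_apply_spanningSets_lt_top (κ a)

end FiniteOnSpanning

section Mecke

variable {Ω E : Type*} [MeasurableSpace Ω] [MeasurableSpace E] {P : Measure Ω} {μ : Measure E}
  {N : Ω → Measure E}

theorem MeckeAdd.lintegral_apply (h : MeckeAdd P μ N) {s : Set E} (hs : MeasurableSet s) :
    ∫⁻ ω, N ω s ∂P = μ s * P Set.univ := by
  simpa [lintegral_indicator_one hs] using
    h (fun _ => s.indicator 1) ((measurable_const.indicator hs).comp measurable_snd)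

theorem MeckeAdd.ae_apply_lt_top [IsFiniteMeasure P] (h : MeckeAdd P μ N) (hN : Measurable N)
    {s : Set E} (hs : MeasurableSet s) (hμs : μ s ≠ ∞) : ∀ᵐ ω ∂P, N ω s < ∞ :=
  ae_lt_top ((Measure.measurable_coe hs).comp hN) <| by
    rw [h.lintegral_apply hs]
    exact ENNReal.mul_ne_top hμs (measure_ne_top P _)

theorem MeckeAdd.ae_finiteOnSpanningOrZero_eq [IsFiniteMeasure P] [SigmaFinite μ]
    (h : MeckeAdd P μ N) (hN : Measurable N) :
    ∀ᵐ ω ∂P, finiteOnSpanningOrZero μ (N ω) = N ω := by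
  filter_upwards [ae_all_iff.2 fun n => h.ae_apply_lt_top hN (measurableSet_spanningSets μ n)
    (measure_spanningSets_lt_top μ n).ne] with ω hω
  exact finiteOnSpanningOrZero_of_forall_lt_top hω

theorem MeckeAdd.ae_ae_dirac_le [MeasurableEq E] [IsFiniteMeasure P] [SigmaFinite μ]
    (h : MeckeAdd P μ N) (hN : Measurable N) :
    ∀ᵐ ω ∂P, ∀ᵐ y ∂N ω, Measure.dirac y ≤ N ω := by
  set T := finiteOnSpanningOrZero μ
  set κ := Kernel.finiteOnSpanningOrZero μ ⟨N, hN⟩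
  -- Mecke's formula for the indicator of `T η {y} < 1`; the truncation `T` makes it measurable.
  set g : Measure E → E → ℝ≥0∞ := fun η y => if 1 ≤ T η {y} then 0 else 1
  have hg : Measurable (Function.uncurry g) :=
    Measurable.ite (measurableSet_le measurable_const
      ((Kernel.finiteOnSpanningOrZero μ ⟨Prod.fst, measurable_fst⟩).measurable_apply_singleton
        measurable_snd)) measurable_const measurable_const
  have hT : ∀ᵐ ω ∂P, T (N ω) = N ω := h.ae_finiteOnSpanningOrZero_eq hN
  have hκN : ∀ᵐ ω ∂P, κ ω = N ω := hT
  have hadd : ∀ᵐ ω ∂P, ∫⁻ x, g (N ω + Measure.dirac x) x ∂μ = 0 := by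
    filter_upwards [hT] with ω hω
    simp [g, T, finiteOnSpanningOrZero_add_dirac hω]
  have hκ : ∀ᵐ ω ∂P, ∫⁻ y, g (κ ω) y ∂κ ω = 0 := by
    have hmeas : Measurable fun ω => ∫⁻ y, g (κ ω) y ∂κ ω :=
      Measurable.lintegral_kernel_prod_right (κ := κ)
        (hg.comp ((κ.measurable.comp measurable_fst).prodMk measurable_snd))
    refine (lintegral_eq_zero_iff hmeas).1 ?_
    rw [lintegral_congr_ae (hκN.mono fun ω hω => by rw [hω]), h g hg,
      lintegral_congr_ae hadd, lintegral_zero]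
  filter_upwards [hκ, hκN, hT] with ω h0 hκω hTω
  rw [hκω] at h0
  filter_upwards [(lintegral_eq_zero_iff (hg.comp (measurable_const.prodMk measurable_id))).1 h0]
    with y hy
  simpa [g, T, hTω, dirac_le_iff_one_le_apply_singleton] using hy

end Mecke

section PathDelta

variable {α X E H : Type*} [MeasurableSpace α] [MeasurableSpace X] [MeasurableSpace E]
  [NormedAddCommGroup H]

def PathDeltaIntegrable (μ : Measure E) (g : Measure E → E → H) (η : Measure E) : Prop :=
  Integrable (fun y => g (rmPt η y) y) η ∧ Integrable (g η) μ

theorem pathDeltaIntegrable_iff [MeasurableEq E] {μ η : Measure E} [SFinite η]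
    {g : Measure E → E → H} (hg : StronglyMeasurable (Function.uncurry g)) :
    PathDeltaIntegrable μ g η ↔
      ∫⁻ y, ‖g (rmPt η y) y‖ₑ ∂η < ∞ ∧ ∫⁻ y, ‖g η y‖ₑ ∂μ < ∞ := by
  have hrm : StronglyMeasurable fun y => g (rmPt η y) y := hg.comp_measurable
    (((Kernel.const E η).measurable_rmPt measurable_id).prodMk measurable_id)
  have hη : StronglyMeasurable (g η) := hg.comp_measurable (measurable_const.prodMk measurable_id)
  exact ⟨fun h => ⟨h.1.2, h.2.2⟩,
    fun h => ⟨⟨hrm.aestronglyMeasurable, h.1⟩, ⟨hη.aestronglyMeasurable, h.2⟩⟩⟩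

theorem measurableSet_pathDeltaIntegrable [MeasurableEq E] {μ : Measure E} [SFinite μ]
    (κ : Kernel α E) [IsSFiniteKernel κ] {G : X → Measure E → E → H}
    (hG : StronglyMeasurable fun q : X × Measure E × E => G q.1 q.2.1 q.2.2) :
    MeasurableSet {p : α × X | PathDeltaIntegrable μ (G p.2) (κ p.1)} := by
  have hGx : ∀ x, StronglyMeasurable (Function.uncurry (G x)) := fun x =>
    hG.comp_measurable (measurable_const.prodMk measurable_id)
  simp_rw [pathDeltaIntegrable_iff (hGx _), Set.ofPred_and]
  refine .inter (measurableSet_lt ?_ measurable_const) (measurableSet_lt ?_ measurable_const)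
  · exact (κ.comap Prod.fst measurable_fst).measurable_lintegral_rmPt
      (F := fun p ν y => ‖G p.2 ν y‖ₑ)
      (hG.enorm.comp ((measurable_snd.comp measurable_fst).prodMk measurable_snd))
  · exact Measurable.lintegral_prod_right'
      (f := fun q : (α × X) × E => ‖G q.1.2 (κ q.1.1) q.2‖ₑ)
      (hG.enorm.comp ((measurable_snd.comp measurable_fst).prodMk
        ((κ.measurable.comp (measurable_fst.comp measurable_fst)).prodMk measurable_snd)))

end PathDelta

section MeckeSub

variable {Ω X E H : Type*} [MeasurableSpace Ω] [MeasurableSpace X] [MeasurableSpace E]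
  [MeasurableEq E] [NormedAddCommGroup H] {P : Measure Ω} [SFinite P] {μ : Measure E}
  [SFinite μ] {N : Ω → Measure E} {κ : Kernel Ω E} [IsSFiniteKernel κ]

theorem MeckeSub.ae_pathDeltaIntegrable (h : MeckeSub P μ N) (hN : Measurable N)
    (hκ : N =ᵐ[P] κ) {g : Measure E → E → H} (hg : StronglyMeasurable (Function.uncurry g))
    (hint : Integrable (fun p : Ω × E => g (N p.1) p.2) (P.prod μ)) :
    ∀ᵐ ω ∂P, PathDeltaIntegrable μ g (N ω) := by
  have hmeas : AEMeasurable (fun ω => ∫⁻ y, ‖g (rmPt (N ω) y) y‖ₑ ∂N ω) P :=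
    (κ.measurable_lintegral_rmPt (F := fun _ ν y => ‖g ν y‖ₑ)
      (hg.enorm.comp measurable_snd)).aemeasurable.congr (hκ.mono fun ω hω => by simp only [hω])
  have hfin : ∫⁻ ω, ∫⁻ y, ‖g (rmPt (N ω) y) y‖ₑ ∂N ω ∂P ≠ ∞ := by
    rw [h (fun ν y => ‖g ν y‖ₑ) hg.enorm,
      ← lintegral_prod (fun p : Ω × E => ‖g (N p.1) p.2‖ₑ)
      (hg.enorm.comp ((hN.comp measurable_fst).prodMk measurable_snd)).aemeasurable]
    exact hint.2.ne
  filter_upwards [ae_lt_top' hmeas hfin, hint.prod_right_ae, hκ] with ω hrm hμ hω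
  rw [hω] at hrm hμ ⊢
  exact (pathDeltaIntegrable_iff hg).2 ⟨hrm, hμ.2⟩

theorem MeckeSub.ae_prod_pathDeltaIntegrable (h : MeckeSub P μ N) (hN : Measurable N)
    (hκ : N =ᵐ[P] κ) {ν : Measure X} [SFinite ν] {G : X → Measure E → E → H}
    (hG : StronglyMeasurable fun q : X × Measure E × E => G q.1 q.2.1 q.2.2)
    (hint : ∀ᵐ x ∂ν, Integrable (fun p : Ω × E => G x (N p.1) p.2) (P.prod μ)) :
    ∀ᵐ p ∂P.prod ν, PathDeltaIntegrable μ (G p.2) (N p.1) := by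
  have hset := measurableSet_pathDeltaIntegrable (μ := μ) κ hG
  have hxω : ∀ᵐ x ∂ν, ∀ᵐ ω ∂P, PathDeltaIntegrable μ (G x) (κ ω) := by
    filter_upwards [hint] with x hx
    filter_upwards [h.ae_pathDeltaIntegrable hN hκ (g := G x)
      (hG.comp_measurable (measurable_const.prodMk measurable_id)) hx, hκ] with ω hω hNω
    rwa [← hNω]
  have hprod : ∀ᵐ p ∂P.prod ν, PathDeltaIntegrable μ (G p.2) (κ p.1) :=
    (Measure.ae_prod_iff_ae_ae hset).2
      ((Measure.ae_ae_comm (p := fun x ω => PathDeltaIntegrable μ (G x) (κ ω))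
        (measurable_swap hset)).1 hxω)
  filter_upwards [hprod, Measure.quasiMeasurePreserving_fst.ae hκ] with p hp hNp
  rwa [hNp]

end MeckeSub

theorem pathDelta_add_dirac_sub_pathDelta {E H : Type*} [MeasurableSpace E]
    [MeasurableSingletonClass E] [NormedAddCommGroup H] [NormedSpace ℝ H] [CompleteSpace H]
    {μ η : Measure E} {f : Measure E → E → H} {x : E} (hf : PathDeltaIntegrable μ f η)
    (hfx : PathDeltaIntegrable μ (fun ν => f (ν + Measure.dirac x)) η)
    (hη : ∀ᵐ y ∂η, Measure.dirac y ≤ η) :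
    pathDelta μ f (η + Measure.dirac x) - pathDelta μ f η
      = pathDelta μ (fun ν y => f (ν + Measure.dirac x) y - f ν y) η + f η x := by
  have hrm : (fun y => f (rmPt (η + Measure.dirac x) y) y)
      =ᵐ[η] fun y => f (rmPt η y + Measure.dirac x) y :=
    hη.mono fun y hy => by simp only [rmPt_add_dirac_of_dirac_le hy]
  rw [pathDelta, pathDelta, pathDelta,
    integral_add_measure (hfx.1.congr hrm.symm) (integrable_dirac enorm_lt_top), integral_dirac,
    rmPt_add_dirac_self, integral_congr_ae hrm, integral_sub hfx.1 hf.1, integral_sub hfx.2 hf.2]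
  abel

theorem commutation_L1_general
    {Ω E H : Type*} [MeasurableSpace Ω] [MeasurableSpace E] [StandardBorelSpace E]
    [NormedAddCommGroup H] [InnerProductSpace ℝ H] [CompleteSpace H]
    (P : Measure Ω) [IsProbabilityMeasure P] (μ : Measure E) [SigmaFinite μ]
    (N : Ω → Measure E) (hMA : MeckeAdd P μ N) (hMS : MeckeSub P μ N)
    (hN : Measurable N)
    (f : Measure E → E → H) (hf : StronglyMeasurable (Function.uncurry f))
    (hΦ : Integrable (fun pr : Ω × E => f (N pr.1) pr.2) (P.prod μ))
    (hDΦ : ∀ᵐ x ∂μ, Integrable (fun pr : Ω × E =>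
        f (N pr.1 + Measure.dirac x) pr.2 - f (N pr.1) pr.2) (P.prod μ)) :
    ∀ᵐ pr ∂(P.prod μ),
      pathDelta μ f (N pr.1 + Measure.dirac pr.2) - pathDelta μ f (N pr.1)
        = pathDelta μ (fun η y => f (η + Measure.dirac pr.2) y - f η y) (N pr.1)
            + f (N pr.1) pr.2 := by
  have hκ : N =ᵐ[P] Kernel.finiteOnSpanningOrZero μ ⟨N, hN⟩ :=
    (hMA.ae_finiteOnSpanningOrZero_eq hN).mono fun _ h => h.symm
  have hshift :
      StronglyMeasurable fun q : E × Measure E × E => f (q.2.1 + Measure.dirac q.1) q.2.2 :=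
    hf.comp_measurable (((measurable_fst.comp measurable_snd).add
      (Measure.measurable_dirac.comp measurable_fst)).prodMk (measurable_snd.comp measurable_snd))
  have hΦx : ∀ᵐ x ∂μ,
      Integrable (fun p : Ω × E => f (N p.1 + Measure.dirac x) p.2) (P.prod μ) := by
    filter_upwards [hDΦ] with x hx
    simpa only [Pi.add_def, sub_add_cancel] using hx.add hΦ
  filter_upwards [(Measure.quasiMeasurePreserving_fst (ν := μ)).ae
      (hMS.ae_pathDeltaIntegrable hN hκ hf hΦ),
    (Measure.quasiMeasurePreserving_fst (ν := μ)).ae (hMA.ae_ae_dirac_le hN),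
    hMS.ae_prod_pathDeltaIntegrable hN hκ (G := fun x ν y => f (ν + Measure.dirac x) y)
      hshift hΦx] with p hΦp hatoms hΦxp
  exact pathDelta_add_dirac_sub_pathDelta hΦp hΦxp hatoms

/-- **Commutation relation (`L¹`-version).**  Assume `(E, ℰ)` is a Borel space.
Let `Φ ∈ L¹(Ω × E;H)` (representative `f`) be such that
`D_x Φ ∈ L¹(Ω × E;H)` for `μ`-a.e. `x`.  Then
`D_x δ(Φ) = δ(D_x Φ) + Φ(x)` holds `P ⊗ μ`-a.e. -/
theorem commutation_L1
    {Ω E H : Type*} [MeasurableSpace Ω] [MeasurableSpace E] [StandardBorelSpace E]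
    [NormedAddCommGroup H] [InnerProductSpace ℝ H] [CompleteSpace H]
    [TopologicalSpace.SeparableSpace H]
    (P : Measure Ω) [IsProbabilityMeasure P] (μ : Measure E) [SigmaFinite μ]
    (N : Ω → Measure E) (hMA : MeckeAdd P μ N) (hMS : MeckeSub P μ N)
    (hN : Measurable N)
    (f : Measure E → E → H) (hf : StronglyMeasurable (Function.uncurry f))
    (hΦ : Integrable (fun pr : Ω × E => f (N pr.1) pr.2) (P.prod μ))
    (hDΦ : ∀ᵐ x ∂μ, Integrable (fun pr : Ω × E =>
        f (N pr.1 + Measure.dirac x) pr.2 - f (N pr.1) pr.2) (P.prod μ)) :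
    ∀ᵐ pr ∂(P.prod μ),
      pathDelta μ f (N pr.1 + Measure.dirac pr.2) - pathDelta μ f (N pr.1)
        = pathDelta μ (fun η y => f (η + Measure.dirac pr.2) y - f η y) (N pr.1)
            + f (N pr.1) pr.2 :=
  commutation_L1_general P μ N hMA hMS hN f hf hΦ hDΦ
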